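/- Fix k ≥ 1, α, β ∈ ℝ with γ = √(α² + β²), a continuous 2π-periodic g : ℝ → ℝ, and i.i.d. standard complex Gaussians (Z_j)_{j=1}^k. Then the real random variables ∫_0^{2π} g(θ) exp( −(1/2) Σ_{j=1}^k (1/√j)[ (α−iβ) Z_j e^{−ijθ} + (α+iβ) conj(Z_j) e^{ijθ} ] ) dθ and ∫_0^{2π} g(θ) exp( (γ/2) Σ_{j=1}^k (1/√j)[ Z_j e^{ijθ} + conj(Z_j) e^{−ijθ} ] ) dθ have the same law (both exponents are real for every realization). -/

import Mathlib

/-!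
Write `α + iβ = γ u` with `|u| = 1`. The real-linear isometry `z ↦ -u z̄` of `ℂ` preserves the
standard complex Gaussian law, which is a rescaled standard Gaussian on `ℂ ≅ ℝ²` and hence
invariant under orthogonal maps. Applied to every coordinate it preserves the joint law of
`(Z_j)`, and it turns the first exponent into the second pointwise, because
`(α - iβ)(-u z̄) = -γ z̄` and `(α + iβ)(-ū z) = -γ z`.
-/

open MeasureTheory Filter Finset

noncomputable section

/-- `ee x = exp(i x)`. -/
def ee (x : ℝ) : ℂ := Complex.exp (Complex.I * x)

/-- Joint law of `k` i.i.d. standard complex Gaussians. -/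
def gaussPi (k : ℕ) : Measure (Fin k → ℂ) :=
  Measure.map (fun x : Fin k → ℝ × ℝ => fun i => ((x i).1 : ℂ) + (x i).2 * Complex.I)
    (Measure.pi fun _ : Fin k =>
      (ProbabilityTheory.gaussianReal 0 (1/2)).prod (ProbabilityTheory.gaussianReal 0 (1/2)))

open ProbabilityTheory Complex ComplexConjugate

theorem MeasureTheory.MeasurePreserving.map_comp {α β γ : Type*} [MeasurableSpace α]
    [MeasurableSpace β] [MeasurableSpace γ] {μ : Measure α} {ν : Measure β} {e : α → β}
    (he : MeasurePreserving e μ ν) (he' : MeasurableEmbedding e) (f : β → γ) :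
    μ.map (f ∘ e) = ν.map f := by
  rw [← he.map_eq]
  by_cases hf : AEMeasurable f (μ.map e)
  · exact (hf.map_map_of_aemeasurable he.aemeasurable).symm
  · rw [Measure.map_of_not_aemeasurable hf,
      Measure.map_of_not_aemeasurable (mt he'.aemeasurable_map_iff.2 hf)]

def complexGaussian : Measure ℂ :=
  ((gaussianReal 0 (1/2)).prod (gaussianReal 0 (1/2))).map fun p => (p.1 : ℂ) + p.2 * I

instance : IsProbabilityMeasure complexGaussian :=
  Measure.isProbabilityMeasure_map (by fun_prop)

theorem stdGaussian_complex_eq_map_prod :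
    stdGaussian ℂ = ((gaussianReal 0 1).prod (gaussianReal 0 1)).map
      fun p => (p.1 : ℂ) + p.2 * I := by
  rw [stdGaussian_eq_map_pi_orthonormalBasis orthonormalBasisOneI,
    ← (measurePreserving_finTwoArrow (gaussianReal 0 1)).symm.map_eq,
    Measure.map_map (by fun_prop) (MeasurableEquiv.measurable _)]
  congr 1
  funext p
  simp [Fin.sum_univ_two]

theorem complexGaussian_eq_map_stdGaussian :
    complexGaussian = (stdGaussian ℂ).map fun z => (Real.sqrt 2)⁻¹ • z := by
  set c : ℝ := (Real.sqrt 2)⁻¹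
  have hc : (gaussianReal 0 1).map (c * ·) = gaussianReal 0 (1/2) := by
    rw [gaussianReal_map_const_mul, mul_zero]
    congr 1
    ext
    simp [c, inv_pow]
  rw [stdGaussian_complex_eq_map_prod, Measure.map_map (by fun_prop) (by fun_prop),
    complexGaussian, ← hc, Measure.map_prod_map _ _ (by fun_prop) (by fun_prop),
    Measure.map_map (by fun_prop) (by fun_prop)]
  congr 1
  ext p
  simp only [Function.comp_apply, Prod.map, Complex.real_smul, ofReal_mul]
  ring

theorem complexGaussian_map_linearIsometryEquiv (L : ℂ ≃ₗᵢ[ℝ] ℂ) :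
    complexGaussian.map L = complexGaussian := by
  have hL : ⇑L ∘ (fun z => (Real.sqrt 2)⁻¹ • z) = (fun z => (Real.sqrt 2)⁻¹ • z) ∘ L :=
    funext fun z => L.map_smul _ z
  rw [complexGaussian_eq_map_stdGaussian, Measure.map_map L.continuous.measurable (by fun_prop),
    hL, ← Measure.map_map (by fun_prop) L.continuous.measurable, stdGaussian_map L]

theorem gaussPi_eq_pi (k : ℕ) : gaussPi k = Measure.pi fun _ : Fin k => complexGaussian :=
  (measurePreserving_pi _ _ fun _ =>
    ⟨(by fun_prop : Measurable fun p : ℝ × ℝ => (p.1 : ℂ) + p.2 * I), rfl⟩).map_eq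

theorem measurePreserving_gaussPi_piCongrRight (k : ℕ) (L : ℂ ≃ₗᵢ[ℝ] ℂ) :
    MeasurePreserving (MeasurableEquiv.piCongrRight fun _ : Fin k => L.toMeasurableEquiv)
      (gaussPi k) (gaussPi k) := by
  rw [gaussPi_eq_pi]
  exact measurePreserving_pi _ _ fun _ =>
    ⟨L.continuous.measurable, complexGaussian_map_linearIsometryEquiv L⟩

theorem conj_mul_exp_arg_mul_I (w : ℂ) : conj w * exp (arg w * I) = ‖w‖ := by
  have hw := norm_mul_exp_arg_mul_I w
  set e := exp (arg w * I)
  calc conj w * e = ‖w‖ * (e * conj e) := by rw [← hw, map_mul, conj_ofReal, hw]; ring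
    _ = ‖w‖ := by rw [mul_conj, normSq_eq_norm_sq, norm_exp_ofReal_mul_I]; simp

theorem rotation_equality_in_law_general (k : ℕ) (α β : ℝ) (g : ℝ → ℝ) :
    Measure.map (fun z : Fin k → ℂ =>
        ∫ θ in (0:ℝ)..(2 * Real.pi), g θ * Real.exp
          ((-(1/2 : ℂ) * ∑ i : Fin k, (1 / (Real.sqrt ((i : ℕ) + 1) : ℂ)) *
            (((α:ℂ) - β * Complex.I) * z i * ee (-(((i : ℕ) + 1) * θ)) +
             ((α:ℂ) + β * Complex.I) * (starRingEnd ℂ) (z i) * ee (((i : ℕ) + 1) * θ))).re))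
      (gaussPi k) =
    Measure.map (fun z : Fin k → ℂ =>
        ∫ θ in (0:ℝ)..(2 * Real.pi), g θ * Real.exp
          (((Real.sqrt (α ^ 2 + β ^ 2) / 2 : ℝ) : ℂ) *
            (∑ i : Fin k, (1 / (Real.sqrt ((i : ℕ) + 1) : ℂ)) *
              (z i * ee (((i : ℕ) + 1) * θ) +
               (starRingEnd ℂ) (z i) * ee (-(((i : ℕ) + 1) * θ))))).re)
      (gaussPi k) := by
  set w : ℂ := α + β * I
  set u : ℂ := exp (arg w * I)
  have hu : ((α : ℂ) - β * I) * u = Real.sqrt (α ^ 2 + β ^ 2) := by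
    have h := conj_mul_exp_arg_mul_I w
    rwa [norm_add_mul_I, map_add, map_mul, conj_ofReal, conj_ofReal, conj_I, mul_neg,
      ← sub_eq_add_neg] at h
  have hu' : ((α : ℂ) + β * I) * conj u = Real.sqrt (α ^ 2 + β ^ 2) := by
    simpa using congrArg conj hu
  let L : ℂ ≃ₗᵢ[ℝ] ℂ := conjLIE.trans (rotation (-Circle.exp (arg w)))
  have hL (z : ℂ) : L z = -u * conj z := by simp [L, u, Circle.coe_exp]
  have hT := measurePreserving_gaussPi_piCongrRight k L
  rw [← hT.map_comp (MeasurableEquiv.measurableEmbedding _)]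
  congr 1
  funext z
  refine intervalIntegral.integral_congr fun θ _ => ?_
  refine congrArg (fun x : ℂ => g θ * Real.exp x.re) ?_
  simp only [Finset.mul_sum]
  refine Finset.sum_congr rfl fun i _ => ?_
  change -(1/2) * (_ * (_ * L (z i) * _ + _ * conj (L (z i)) * _)) = _
  rw [hL, map_mul, map_neg, conj_conj]
  push_cast
  linear_combination (1 / 2 / (Real.sqrt ((i : ℕ) + 1) : ℂ)) *
    (conj (z i) * ee (-(((i : ℕ) + 1) * θ)) * hu + z i * ee (((i : ℕ) + 1) * θ) * hu')

theorem rotation_equality_in_law (k : ℕ) (hk : 1 ≤ k) (α β : ℝ)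
    (g : ℝ → ℝ) (hgc : Continuous g) (hgper : Function.Periodic g (2 * Real.pi)) :
    Measure.map (fun z : Fin k → ℂ =>
        ∫ θ in (0:ℝ)..(2 * Real.pi), g θ * Real.exp
          ((-(1/2 : ℂ) * ∑ i : Fin k, (1 / (Real.sqrt ((i : ℕ) + 1) : ℂ)) *
            (((α:ℂ) - β * Complex.I) * z i * ee (-(((i : ℕ) + 1) * θ)) +
             ((α:ℂ) + β * Complex.I) * (starRingEnd ℂ) (z i) * ee (((i : ℕ) + 1) * θ))).re))
      (gaussPi k) =
    Measure.map (fun z : Fin k → ℂ =>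
        ∫ θ in (0:ℝ)..(2 * Real.pi), g θ * Real.exp
          (((Real.sqrt (α ^ 2 + β ^ 2) / 2 : ℝ) : ℂ) *
            (∑ i : Fin k, (1 / (Real.sqrt ((i : ℕ) + 1) : ℂ)) *
              (z i * ee (((i : ℕ) + 1) * θ) +
               (starRingEnd ℂ) (z i) * ee (-(((i : ℕ) + 1) * θ))))).re)
      (gaussPi k) :=
  rotation_equality_in_law_general k α β g

end
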